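/- arXiv:1512.03769 — 4 statements merged into one kernel-verified Lean document; each statement's English description precedes it below -/
import Mathlib

section
/- Suppose W is nonzero and irreducible, and let 0 ≤ d₁ < d₂ with D_w + d₁ I positive definite (i.e., w_j· + d₁ > 0 for all j). For i = 1, 2 let λ_{J,i} denote the largest eigenvalue of (D_w + d_i I)^{-1/2} W (D_w + d_i I)^{-1/2}. Then λ_{J,i} > 0 for i = 1, 2 and λ_{J,2} < λ_{J,1}; equivalently, λ_{J,1}^{-1} < λ_{J,2}^{-1}, so the upper bound of the admissible range for the propriety parameter ρ is strictly increasing in d. -/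
/-!
The largest eigenvalue `λ(A)` of a real symmetric matrix is the maximum of `xᵀAx` over unit
vectors. When `A` has nonnegative entries, replacing a top eigenvector by its entrywise absolute
value shows that this maximum is attained at a nonnegative unit vector `u`. As `d` grows, the
scaling `(w_j + d)^{-1/2}` strictly decreases, so `M d₂ ≤ M d₁` entrywise, strictly wherever
`M d₂` is positive. Since `uᵀ (M d₂) u = λ(M d₂) > 0` (test the all-ones vector), some term
`u_i (M d₂)_{ij} u_j` is positive, whence `λ(M d₂) = uᵀ (M d₂) u < uᵀ (M d₁) u ≤ λ(M d₁)`.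
-/

open Matrix Unitary
open scoped ComplexOrder

namespace Matrix

section RCLike

variable {n 𝕜 : Type*} [Fintype n] [DecidableEq n] [RCLike 𝕜] {A : Matrix n n 𝕜}

theorem IsHermitian.posSemidef_smul_one_sub (hA : A.IsHermitian) {c : ℝ}
    (hc : ∀ i, hA.eigenvalues i ≤ c) : ((c : 𝕜) • 1 - A).PosSemidef := by
  have hdiag : diagonal (fun i => ((c - hA.eigenvalues i : ℝ) : 𝕜)) =
      (c : 𝕜) • 1 - diagonal (RCLike.ofReal ∘ hA.eigenvalues) := by
    ext i j; by_cases hij : i = j <;> simp [hij, sub_smul, Algebra.algebraMap_eq_smul_one]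
  have h : (c : 𝕜) • 1 - A = conjStarAlgAut 𝕜 _ hA.eigenvectorUnitary
      (diagonal fun i => ((c - hA.eigenvalues i : ℝ) : 𝕜)) := by
    rw [hdiag, map_sub, map_smul, map_one, ← hA.spectral_theorem]
  rw [h, conjStarAlgAut_apply, isUnit_coe.posSemidef_star_right_conjugate_iff,
    posSemidef_diagonal_iff]
  exact fun i => RCLike.ofReal_nonneg.mpr (sub_nonneg.mpr (hc i))

end RCLike

variable {n : Type*} [Fintype n] {A B : Matrix n n ℝ}

theorem dotProduct_mulVec_eq_sum_sum (A : Matrix n n ℝ) (x y : n → ℝ) :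
    x ⬝ᵥ (A *ᵥ y) = ∑ i, ∑ j, x i * (A i j * y j) := by
  simp only [dotProduct, mulVec, Finset.mul_sum]

theorem dotProduct_mulVec_le_abs (hA : ∀ i j, 0 ≤ A i j) (x : n → ℝ) :
    x ⬝ᵥ (A *ᵥ x) ≤ |x| ⬝ᵥ (A *ᵥ |x|) := by
  simp only [dotProduct_mulVec_eq_sum_sum, Pi.abs_apply]
  refine Finset.sum_le_sum fun i _ => Finset.sum_le_sum fun j _ => ?_
  calc x i * (A i j * x j) ≤ |x i * (A i j * x j)| := le_abs_self _
    _ = |x i| * (A i j * |x j|) := by rw [abs_mul, abs_mul, abs_of_nonneg (hA i j)]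

namespace IsHermitian

variable [DecidableEq n]

theorem dotProduct_mulVec_le (hA : A.IsHermitian) (x : n → ℝ) :
    x ⬝ᵥ (A *ᵥ x) ≤ (⨆ i, hA.eigenvalues i) * (x ⬝ᵥ x) := by
  have hpsd := hA.posSemidef_smul_one_sub fun i => le_ciSup (Set.finite_range _).bddAbove i
  simpa [sub_mulVec, smul_mulVec, dotProduct_smul, sub_nonneg] using
    hpsd.dotProduct_mulVec_nonneg x

theorem exists_mulVec_eq_iSup_eigenvalues_smul [Nonempty n] (hA : A.IsHermitian) :
    ∃ x : n → ℝ, x ⬝ᵥ x = 1 ∧ A *ᵥ x = (⨆ i, hA.eigenvalues i) • x := by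
  obtain ⟨i, hi⟩ := exists_eq_ciSup_of_finite (f := hA.eigenvalues)
  refine ⟨hA.eigenvectorBasis i, ?_, hi ▸ hA.mulVec_eigenvectorBasis i⟩
  have h := real_inner_self_eq_norm_sq (hA.eigenvectorBasis i)
  rw [hA.eigenvectorBasis.orthonormal.1 i, EuclideanSpace.inner_eq_star_dotProduct] at h
  simpa using h

theorem exists_nonneg_dotProduct_mulVec_eq_iSup_eigenvalues [Nonempty n] (hA : A.IsHermitian)
    (hA₀ : ∀ i j, 0 ≤ A i j) :
    ∃ u : n → ℝ, 0 ≤ u ∧ u ⬝ᵥ u = 1 ∧ u ⬝ᵥ (A *ᵥ u) = ⨆ i, hA.eigenvalues i := by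
  obtain ⟨x, hxx, hAx⟩ := hA.exists_mulVec_eq_iSup_eigenvalues_smul
  have habs : |x| ⬝ᵥ |x| = 1 := by
    simpa only [dotProduct, Pi.abs_apply, abs_mul_abs_self] using hxx
  refine ⟨|x|, abs_nonneg x, habs, le_antisymm ?_ ?_⟩
  · simpa [habs] using hA.dotProduct_mulVec_le |x|
  · calc ⨆ i, hA.eigenvalues i = x ⬝ᵥ (A *ᵥ x) := by
          rw [hAx, dotProduct_smul, hxx, smul_eq_mul, mul_one]
      _ ≤ |x| ⬝ᵥ (A *ᵥ |x|) := dotProduct_mulVec_le_abs hA₀ x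

theorem iSup_eigenvalues_pos (hA : A.IsHermitian) (hA₀ : ∀ i j, 0 ≤ A i j) {i j : n}
    (hij : 0 < A i j) : 0 < ⨆ i, hA.eigenvalues i := by
  have hsum : 0 < (1 : n → ℝ) ⬝ᵥ (A *ᵥ 1) := by
    simp only [dotProduct_mulVec_eq_sum_sum, Pi.one_apply, one_mul, mul_one]
    exact Finset.sum_pos' (fun k _ => Finset.sum_nonneg fun l _ => hA₀ k l)
      ⟨i, Finset.mem_univ i, Finset.sum_pos' (fun l _ => hA₀ i l) ⟨j, Finset.mem_univ j, hij⟩⟩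
  have hle := hA.dotProduct_mulVec_le 1
  exact pos_of_mul_pos_left (hsum.trans_le hle) (by simp [dotProduct])

theorem iSup_eigenvalues_lt_iSup_eigenvalues (hA : A.IsHermitian) (hB : B.IsHermitian)
    (hA₀ : ∀ i j, 0 ≤ A i j) (hAB : ∀ i j, A i j ≤ B i j)
    (hAB_lt : ∀ i j, 0 < A i j → A i j < B i j) (hpos : 0 < ⨆ i, hA.eigenvalues i) :
    ⨆ i, hA.eigenvalues i < ⨆ i, hB.eigenvalues i := by
  have : Nonempty n := by
    by_contra h
    rw [not_nonempty_iff] at h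
    exact hpos.ne' (Real.iSup_of_isEmpty _)
  obtain ⟨u, hu₀, huu, hAu⟩ := hA.exists_nonneg_dotProduct_mulVec_eq_iSup_eigenvalues hA₀
  have hterm_le : ∀ i j, u i * (A i j * u j) ≤ u i * (B i j * u j) := fun i j =>
    mul_le_mul_of_nonneg_left (mul_le_mul_of_nonneg_right (hAB i j) (hu₀ j)) (hu₀ i)
  obtain ⟨i, j, hij⟩ : ∃ i j, 0 < u i * (A i j * u j) := by
    by_contra! h
    have : u ⬝ᵥ (A *ᵥ u) ≤ 0 := by
      rw [dotProduct_mulVec_eq_sum_sum]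
      exact Finset.sum_nonpos fun i _ => Finset.sum_nonpos fun j _ => h i j
    linarith
  have hAu_j : 0 < A i j * u j := pos_of_mul_pos_right hij (hu₀ i)
  have hu_i : 0 < u i := pos_of_mul_pos_left hij hAu_j.le
  have hu_j : 0 < u j := pos_of_mul_pos_right hAu_j (hA₀ i j)
  have hA_ij : 0 < A i j := pos_of_mul_pos_left hAu_j (hu₀ j)
  have hterm_lt : u i * (A i j * u j) < u i * (B i j * u j) :=
    mul_lt_mul_of_pos_left (mul_lt_mul_of_pos_right (hAB_lt i j hA_ij) hu_j) hu_i
  calc ⨆ i, hA.eigenvalues i = u ⬝ᵥ (A *ᵥ u) := hAu.symm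
    _ < u ⬝ᵥ (B *ᵥ u) := by
      simp only [dotProduct_mulVec_eq_sum_sum]
      exact Finset.sum_lt_sum (fun k _ => Finset.sum_le_sum fun l _ => hterm_le k l)
        ⟨i, Finset.mem_univ i, Finset.sum_lt_sum (fun l _ => hterm_le i l)
          ⟨j, Finset.mem_univ j, hterm_lt⟩⟩
    _ ≤ ⨆ i, hB.eigenvalues i := by simpa [huu] using hB.dotProduct_mulVec_le u

end IsHermitian

section DiagonalScaling

variable [DecidableEq n]

theorem diagonal_mul_mul_diagonal_apply (a : n → ℝ) (W : Matrix n n ℝ) (i j : n) :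
    (diagonal a * W * diagonal a) i j = W i j * (a i * a j) := by
  simp only [diagonal_mul, mul_diagonal]
  ring

variable {W : Matrix n n ℝ} {a b : n → ℝ}

theorem IsHermitian.iSup_eigenvalues_diagonal_mul_mul_diagonal_pos
    (hA : (diagonal a * W * diagonal a).IsHermitian) (hW₀ : ∀ i j, 0 ≤ W i j) (hW : W ≠ 0)
    (ha : ∀ i, 0 < a i) : 0 < ⨆ i, hA.eigenvalues i := by
  obtain ⟨i, j, hij⟩ : ∃ i j, W i j ≠ 0 := by simpa [← Matrix.ext_iff] using hW
  refine hA.iSup_eigenvalues_pos (i := i) (j := j) (fun k l => ?_) ?_ <;>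
    rw [diagonal_mul_mul_diagonal_apply]
  · exact mul_nonneg (hW₀ k l) (mul_pos (ha k) (ha l)).le
  · exact mul_pos ((hW₀ i j).lt_of_ne' hij) (mul_pos (ha i) (ha j))

theorem IsHermitian.iSup_eigenvalues_diagonal_mul_mul_diagonal_lt
    (hA : (diagonal a * W * diagonal a).IsHermitian)
    (hB : (diagonal b * W * diagonal b).IsHermitian) (hW₀ : ∀ i j, 0 ≤ W i j) (hW : W ≠ 0)
    (ha : ∀ i, 0 < a i) (hab : ∀ i, a i < b i) :
    ⨆ i, hA.eigenvalues i < ⨆ i, hB.eigenvalues i := by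
  have hab_mul : ∀ i j, a i * a j < b i * b j := fun i j =>
    mul_lt_mul'' (hab i) (hab j) (ha i).le (ha j).le
  refine hA.iSup_eigenvalues_lt_iSup_eigenvalues hB (fun i j => ?_) (fun i j => ?_)
    (fun i j hij => ?_) (hA.iSup_eigenvalues_diagonal_mul_mul_diagonal_pos hW₀ hW ha)
  · rw [diagonal_mul_mul_diagonal_apply]
    exact mul_nonneg (hW₀ i j) (mul_pos (ha i) (ha j)).le
  · rw [diagonal_mul_mul_diagonal_apply, diagonal_mul_mul_diagonal_apply]
    exact mul_le_mul_of_nonneg_left (hab_mul i j).le (hW₀ i j)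
  · rw [diagonal_mul_mul_diagonal_apply] at hij
    rw [diagonal_mul_mul_diagonal_apply, diagonal_mul_mul_diagonal_apply]
    exact mul_lt_mul_of_pos_left (hab_mul i j)
      (pos_of_mul_pos_left hij (mul_pos (ha i) (ha j)).le)

end DiagonalScaling

end Matrix

theorem max_eigenvalue_strict_antitone_in_d_general
    {J : ℕ} (W : Matrix (Fin J) (Fin J) ℝ)
    (hWnonneg : ∀ i j, 0 ≤ W i j)
    (hWne : W ≠ 0)
    (w : Fin J → ℝ)
    (d₁ d₂ : ℝ) (hd : d₁ < d₂) (hpos : ∀ j, 0 < w j + d₁)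
    (M : ℝ → Matrix (Fin J) (Fin J) ℝ)
    (hM : ∀ d, M d = Matrix.diagonal (fun j => (Real.sqrt (w j + d))⁻¹) * W *
        Matrix.diagonal (fun j => (Real.sqrt (w j + d))⁻¹))
    (h1 : (M d₁).IsHermitian) (h2 : (M d₂).IsHermitian) :
    0 < (⨆ j, h1.eigenvalues j) ∧ 0 < (⨆ j, h2.eigenvalues j) ∧
      (⨆ j, h2.eigenvalues j) < (⨆ j, h1.eigenvalues j) ∧
      (⨆ j, h1.eigenvalues j)⁻¹ < (⨆ j, h2.eigenvalues j)⁻¹ := by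
  obtain rfl : M = fun d => diagonal (fun j => (Real.sqrt (w j + d))⁻¹) * W *
      diagonal (fun j => (Real.sqrt (w j + d))⁻¹) := funext hM
  have hpos₂ : ∀ j, 0 < (Real.sqrt (w j + d₂))⁻¹ := fun j =>
    inv_pos.mpr (Real.sqrt_pos.mpr ((hpos j).trans (by linarith)))
  have hlt₁₂ : ∀ j, (Real.sqrt (w j + d₂))⁻¹ < (Real.sqrt (w j + d₁))⁻¹ := fun j =>
    inv_strictAnti₀ (Real.sqrt_pos.mpr (hpos j)) (Real.sqrt_lt_sqrt (hpos j).le (by linarith))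
  have hlam₂ := h2.iSup_eigenvalues_diagonal_mul_mul_diagonal_pos hWnonneg hWne hpos₂
  have hlt := h2.iSup_eigenvalues_diagonal_mul_mul_diagonal_lt h1 hWnonneg hWne hpos₂ hlt₁₂
  exact ⟨hlam₂.trans hlt, hlam₂, hlt, inv_strictAnti₀ hlam₂ hlt⟩

/-- If `W` is nonzero, irreducible, symmetric, nonnegative with zero diagonal and
`0 ≤ d₁ < d₂` with `D_w + d₁ I` positive definite, then the largest eigenvalues
`λ_{J,i}` of `(D_w + dᵢ I)^{-1/2} W (D_w + dᵢ I)^{-1/2}` are positive and satisfy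
`λ_{J,2} < λ_{J,1}`, equivalently `λ_{J,1}⁻¹ < λ_{J,2}⁻¹`: the upper bound of the
admissible range for the propriety parameter `ρ` is strictly increasing in `d`. -/
theorem max_eigenvalue_strict_antitone_in_d
    {J : ℕ} (hJ : 1 ≤ J) (W : Matrix (Fin J) (Fin J) ℝ)
    (hWsym : W.IsSymm) (hWnonneg : ∀ i j, 0 ≤ W i j) (hWdiag : ∀ i, W i i = 0)
    (hWne : W ≠ 0)
    (hWirred : ∀ S : Set (Fin J), S.Nonempty → S ≠ Set.univ →
      ∃ i ∈ S, ∃ j ∉ S, W i j ≠ 0)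
    (w : Fin J → ℝ) (hw : ∀ j, w j = ∑ i, W j i)
    (d₁ d₂ : ℝ) (hd₁ : 0 ≤ d₁) (hd : d₁ < d₂) (hpos : ∀ j, 0 < w j + d₁)
    (M : ℝ → Matrix (Fin J) (Fin J) ℝ)
    (hM : ∀ d, M d = Matrix.diagonal (fun j => (Real.sqrt (w j + d))⁻¹) * W *
        Matrix.diagonal (fun j => (Real.sqrt (w j + d))⁻¹))
    (h1 : (M d₁).IsHermitian) (h2 : (M d₂).IsHermitian) :
    0 < (⨆ j, h1.eigenvalues j) ∧ 0 < (⨆ j, h2.eigenvalues j) ∧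
      (⨆ j, h2.eigenvalues j) < (⨆ j, h1.eigenvalues j) ∧
      (⨆ j, h1.eigenvalues j)⁻¹ < (⨆ j, h2.eigenvalues j)⁻¹ :=
  max_eigenvalue_strict_antitone_in_d_general W hWnonneg hWne w d₁ d₂ hd hpos M hM h1 h2
end

section
/- Let D be a J×J diagonal matrix with strictly positive diagonal entries, all at most c, and let S be a J×J real symmetric positive definite matrix with spectral decomposition S = P diag(s₁, …, s_J) P^T, P orthogonal. Then for every η > 0 and x ∈ ℝ^J, writing u = P^T x, x^T (D + ηS^{-1})^{-1} x ≥ (c + η)^{-1} ∑_{j : s_j ≥ 1} u_j². Consequently, (x^T (D + ηS^{-1})^{-1} x)^{-J/2} ≤ k′ (c + η)^{J/2} with the constant k′ = (∑_{j : s_j ≥ 1} u_j²)^{-J/2}, whenever that sum is positive. -/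
/-!
For the positive definite matrix `M = D + η S⁻¹`, Cauchy–Schwarz in the inner product defined
by `M` gives `(x ⬝ y)² ≤ (xᵀ M⁻¹ x) (yᵀ M y)` for every `y`. Test it on `y = P v`, where `v` is
`u = Pᵀ x` with the coordinates `j` having `s j < 1` set to zero. Then `x ⬝ y = ‖v‖² = T` is the
sum in the statement, while `yᵀ D y ≤ c ‖v‖²` and `yᵀ S⁻¹ y = ∑ v_j² / s_j ≤ ‖v‖²`, so
`T² ≤ (xᵀ M⁻¹ x) (c + η) T`. The second claim follows since `t ↦ t ^ (-J/2)` is antitone.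
-/

open Matrix

namespace Matrix

variable {n : Type*} [Fintype n]

theorem dotProduct_ite_eq_sum_filter (p : n → Prop) [DecidablePred p] (u : n → ℝ) :
    u ⬝ᵥ (fun j => if p j then u j else 0) = ∑ j ∈ Finset.univ.filter p, u j ^ 2 := by
  simp only [Finset.sum_filter, dotProduct]
  exact Finset.sum_congr rfl fun j _ => by split_ifs <;> ring

theorem ite_dotProduct_ite_eq_sum_filter (p : n → Prop) [DecidablePred p] (u : n → ℝ) :
    (fun j => if p j then u j else 0) ⬝ᵥ (fun j => if p j then u j else 0)
      = ∑ j ∈ Finset.univ.filter p, u j ^ 2 := by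
  simp only [Finset.sum_filter, dotProduct]
  exact Finset.sum_congr rfl fun j _ => by split_ifs <;> ring

variable [DecidableEq n]

theorem PosDef.sq_dotProduct_le {M : Matrix n n ℝ} (hM : M.PosDef) (x y : n → ℝ) :
    (x ⬝ᵥ y) ^ 2 ≤ (x ⬝ᵥ (M⁻¹ *ᵥ x)) * (y ⬝ᵥ (M *ᵥ y)) := by
  set z := M⁻¹ *ᵥ x
  have hMz : M *ᵥ z = x := by
    rw [mulVec_mulVec, mul_nonsing_inv _ ((isUnit_iff_isUnit_det M).1 hM.isUnit), one_mulVec]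
  -- Cauchy–Schwarz for `(a, b) ↦ a ⬝ᵥ M *ᵥ b` at `z` and `y`, where `z ⬝ᵥ M *ᵥ y = x ⬝ᵥ y`
  have hCS := LinearMap.BilinForm.apply_mul_apply_le_of_forall_zero_le (toLinearMap₂' ℝ M)
    (fun w => by simpa [toLinearMap₂'_apply'] using hM.posSemidef.dotProduct_mulVec_nonneg w) z y
  have hMT : Mᵀ = M := hM.isHermitian.eq
  simp only [toLinearMap₂'_apply'] at hCS
  rwa [dotProduct_mulVec z, ← mulVec_transpose, hMT, hMz, dotProduct_comm y x,
    dotProduct_comm z x, ← sq] at hCS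

theorem PosDef.le_mul_dotProduct_inv_mulVec {M : Matrix n n ℝ} (hM : M.PosDef)
    {x y : n → ℝ} {a : ℝ} (hxy : 0 < x ⬝ᵥ y) (hy : y ⬝ᵥ (M *ᵥ y) ≤ a * (x ⬝ᵥ y)) :
    x ⬝ᵥ y ≤ a * (x ⬝ᵥ (M⁻¹ *ᵥ x)) := by
  have hQ : 0 ≤ x ⬝ᵥ (M⁻¹ *ᵥ x) := by
    simpa using hM.inv.posSemidef.dotProduct_mulVec_nonneg x
  nlinarith [hM.sq_dotProduct_le x y, mul_le_mul_of_nonneg_left hy hQ]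

theorem dotProduct_diagonal_mulVec_le {d : n → ℝ} {c : ℝ} (hd : ∀ j, d j ≤ c) (y : n → ℝ) :
    y ⬝ᵥ (diagonal d *ᵥ y) ≤ c * (y ⬝ᵥ y) := by
  simp only [dotProduct, mulVec_diagonal, Finset.mul_sum]
  exact Finset.sum_le_sum fun j _ => by nlinarith [hd j, mul_self_nonneg (y j)]

theorem mulVec_dotProduct_mulVec_of_transpose_mul_self {P : Matrix n n ℝ} (hP : Pᵀ * P = 1)
    (v w : n → ℝ) : (P *ᵥ v) ⬝ᵥ (P *ᵥ w) = v ⬝ᵥ w := by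
  rw [dotProduct_mulVec, ← mulVec_transpose, mulVec_mulVec, hP, one_mulVec]

theorem dotProduct_inv_mulVec_le_of_one_le_on_support {P S : Matrix n n ℝ} {s v : n → ℝ}
    (hP : Pᵀ * P = 1) (hS : S = P * diagonal s * Pᵀ) (hS_det : IsUnit S.det)
    (hv : ∀ j, v j ≠ 0 → 1 ≤ s j) :
    (P *ᵥ v) ⬝ᵥ (S⁻¹ *ᵥ (P *ᵥ v)) ≤ v ⬝ᵥ v := by
  set w : n → ℝ := fun j => v j / s j
  have hSw : S *ᵥ (P *ᵥ w) = P *ᵥ v := by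
    rw [hS, mulVec_mulVec, Matrix.mul_assoc, hP, Matrix.mul_one, ← mulVec_mulVec]
    congr 1
    funext j
    rw [mulVec_diagonal]
    by_cases hj : v j = 0
    · simp [w, hj]
    · exact mul_div_cancel₀ _ (zero_lt_one.trans_le (hv j hj)).ne'
  have hS_inv : S⁻¹ *ᵥ (P *ᵥ v) = P *ᵥ w := by
    rw [← hSw, mulVec_mulVec, nonsing_inv_mul _ hS_det, one_mulVec]
  rw [hS_inv, mulVec_dotProduct_mulVec_of_transpose_mul_self hP]
  refine Finset.sum_le_sum fun j _ => ?_
  by_cases hj : v j = 0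
  · simp [w, hj]
  · rw [show v j * w j = v j * v j / s j from (mul_div_assoc _ _ _).symm]
    exact div_le_self (mul_self_nonneg _) (hv j hj)

theorem dotProduct_diagonal_add_smul_inv_mulVec_le {P S : Matrix n n ℝ} {d s v : n → ℝ}
    {c η : ℝ} (hd : ∀ j, d j ≤ c) (hη : 0 ≤ η) (hP : Pᵀ * P = 1)
    (hS : S = P * diagonal s * Pᵀ) (hS_det : IsUnit S.det) (hv : ∀ j, v j ≠ 0 → 1 ≤ s j) :
    (P *ᵥ v) ⬝ᵥ ((diagonal d + η • S⁻¹) *ᵥ (P *ᵥ v)) ≤ (c + η) * (v ⬝ᵥ v) := by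
  have hD := dotProduct_diagonal_mulVec_le hd (P *ᵥ v)
  rw [mulVec_dotProduct_mulVec_of_transpose_mul_self hP] at hD
  have hSinv := dotProduct_inv_mulVec_le_of_one_le_on_support hP hS hS_det hv
  rw [add_mulVec, dotProduct_add, smul_mulVec, dotProduct_smul, smul_eq_mul]
  nlinarith [mul_le_mul_of_nonneg_left hSinv hη]

end Matrix

theorem Real.rpow_neg_le_of_le_mul {t k q r : ℝ} (ht : 0 < t) (hk : 0 < k) (h : t ≤ k * q)
    (hr : 0 ≤ r) : q ^ (-r) ≤ t ^ (-r) * k ^ r := by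
  have htk : 0 < t / k := div_pos ht hk
  calc q ^ (-r) ≤ (t / k) ^ (-r) :=
        Real.rpow_le_rpow_of_nonpos htk ((div_le_iff₀' hk).2 h) (neg_nonpos.2 hr)
    _ = t ^ (-r) * k ^ r := by
        rw [Real.div_rpow ht.le hk.le, Real.rpow_neg hk.le, div_inv_eq_mul]

theorem quadratic_form_inv_lower_bound_general
    {J : ℕ} (dd : Fin J → ℝ) (c : ℝ)
    (hdd : ∀ j, 0 < dd j) (hddc : ∀ j, dd j ≤ c)
    (D : Matrix (Fin J) (Fin J) ℝ) (hD : D = Matrix.diagonal dd)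
    (P : Matrix (Fin J) (Fin J) ℝ) (hP : P * Pᵀ = 1) (s : Fin J → ℝ)
    (S : Matrix (Fin J) (Fin J) ℝ) (hS : S = P * Matrix.diagonal s * Pᵀ)
    (hSpd : S.PosDef) (η : ℝ) (hη : 0 < η) (x : Fin J → ℝ) :
    (c + η)⁻¹ * ∑ j ∈ Finset.univ.filter (fun j => 1 ≤ s j), ((Pᵀ *ᵥ x) j) ^ 2
        ≤ x ⬝ᵥ ((D + η • S⁻¹)⁻¹ *ᵥ x) ∧
      (0 < ∑ j ∈ Finset.univ.filter (fun j => 1 ≤ s j), ((Pᵀ *ᵥ x) j) ^ 2 →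
        (x ⬝ᵥ ((D + η • S⁻¹)⁻¹ *ᵥ x)) ^ (-(J : ℝ) / 2)
          ≤ (∑ j ∈ Finset.univ.filter (fun j => 1 ≤ s j),
              ((Pᵀ *ᵥ x) j) ^ 2) ^ (-(J : ℝ) / 2) * (c + η) ^ ((J : ℝ) / 2)) := by
  have hPP : Pᵀ * P = 1 := mul_eq_one_comm.mp hP
  set T := ∑ j ∈ Finset.univ.filter (fun j => 1 ≤ s j), ((Pᵀ *ᵥ x) j) ^ 2
  set v : Fin J → ℝ := fun j => if 1 ≤ s j then (Pᵀ *ᵥ x) j else 0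
  have hxy : x ⬝ᵥ (P *ᵥ v) = T := by
    rw [dotProduct_mulVec, ← mulVec_transpose, dotProduct_ite_eq_sum_filter]
  have hM : (D + η • S⁻¹).PosDef :=
    hD ▸ (posDef_diagonal_iff.2 hdd).add_posSemidef (hSpd.inv.posSemidef.smul hη.le)
  have hQ : 0 ≤ x ⬝ᵥ ((D + η • S⁻¹)⁻¹ *ᵥ x) := by
    simpa using hM.inv.posSemidef.dotProduct_mulVec_nonneg x
  have hyMy : (P *ᵥ v) ⬝ᵥ ((D + η • S⁻¹) *ᵥ (P *ᵥ v)) ≤ (c + η) * T := by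
    rw [hD, ← show v ⬝ᵥ v = T from ite_dotProduct_ite_eq_sum_filter _ _]
    refine dotProduct_diagonal_add_smul_inv_mulVec_le hddc hη.le hPP hS
      ((isUnit_iff_isUnit_det S).1 hSpd.isUnit) fun j hj => ?_
    by_contra h
    simp [v, h] at hj
  have hT0 : 0 ≤ T := Finset.sum_nonneg fun j _ => sq_nonneg _
  rcases hT0.eq_or_lt with hT | hT
  · exact ⟨by rw [← hT, mul_zero]; exact hQ, fun h => absurd hT h.ne⟩
  have key := hM.le_mul_dotProduct_inv_mulVec (hxy ▸ hT) (hxy ▸ hyMy)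
  rw [hxy] at key
  have hcη : 0 < c + η := pos_of_mul_pos_left (hT.trans_le key) hQ
  refine ⟨(inv_mul_le_iff₀ hcη).2 key, fun _ => ?_⟩
  rw [neg_div]
  exact Real.rpow_neg_le_of_le_mul hT hcη key (by positivity)

/-- Let `D` be diagonal with strictly positive entries, all at most `c`, and let
`S = P diag(s) Pᵀ` be symmetric positive definite with `P` orthogonal.  For `η > 0`
and `x ∈ ℝ^J`, with `u = Pᵀ x`,
`xᵀ (D + ηS⁻¹)⁻¹ x ≥ (c + η)⁻¹ ∑_{j : sⱼ ≥ 1} uⱼ²`; consequently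
`(xᵀ (D + ηS⁻¹)⁻¹ x)^{-J/2} ≤ k′ (c + η)^{J/2}` with
`k′ = (∑_{j : sⱼ ≥ 1} uⱼ²)^{-J/2}` whenever that sum is positive. -/
theorem quadratic_form_inv_lower_bound
    {J : ℕ} (hJ : 1 ≤ J) (dd : Fin J → ℝ) (c : ℝ)
    (hdd : ∀ j, 0 < dd j) (hddc : ∀ j, dd j ≤ c)
    (D : Matrix (Fin J) (Fin J) ℝ) (hD : D = Matrix.diagonal dd)
    (P : Matrix (Fin J) (Fin J) ℝ) (hP : P * Pᵀ = 1) (s : Fin J → ℝ)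
    (S : Matrix (Fin J) (Fin J) ℝ) (hS : S = P * Matrix.diagonal s * Pᵀ)
    (hSpd : S.PosDef) (η : ℝ) (hη : 0 < η) (x : Fin J → ℝ) :
    (c + η)⁻¹ * ∑ j ∈ Finset.univ.filter (fun j => 1 ≤ s j), ((Pᵀ *ᵥ x) j) ^ 2
        ≤ x ⬝ᵥ ((D + η • S⁻¹)⁻¹ *ᵥ x) ∧
      (0 < ∑ j ∈ Finset.univ.filter (fun j => 1 ≤ s j), ((Pᵀ *ᵥ x) j) ^ 2 →
        (x ⬝ᵥ ((D + η • S⁻¹)⁻¹ *ᵥ x)) ^ (-(J : ℝ) / 2)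
          ≤ (∑ j ∈ Finset.univ.filter (fun j => 1 ≤ s j),
              ((Pᵀ *ᵥ x) j) ^ 2) ^ (-(J : ℝ) / 2) * (c + η) ^ ((J : ℝ) / 2)) :=
  quadratic_form_inv_lower_bound_general dd c hdd hddc D hD P hP s S hS hSpd η hη x
end

section
/- Let D be a J×J diagonal matrix whose diagonal entries are all at least b > 0, and let S be a J×J real symmetric positive definite matrix with eigenvalues s₁, …, s_J. Then for every η > 0, det(D + ηS^{-1}) ≥ ∏_{j=1}^J (b s_j + η)/s_j ≥ (b + η)^J / ∏_{j=1}^J max{s_j, 1}. Consequently, det(D + ηS^{-1})^{-1/2} ≤ (b + η)^{-J/2} ∏_{j=1}^J max{s_j, 1}^{1/2}. -/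
/-!
Since `D ≥ b • 1` in the Loewner order, `D + η S⁻¹ = (b • 1 + η S⁻¹) + (D - b • 1)` with the
first summand positive definite and the second positive semidefinite, and the determinant is
monotone along such sums. The matrix `b • 1 + η S⁻¹ = S⁻¹ (b S + η)` is diagonalized by `P`,
which gives `det = ∏ⱼ (b sⱼ + η) / sⱼ`. The remaining bounds are termwise scalar inequalities
and the antitonicity of `x ↦ x ^ (-1/2)`.
-/

open Matrix

namespace Matrix

variable {n : Type*} [Fintype n] [DecidableEq n]

lemma PosSemidef.one_le_det_one_add {M : Matrix n n ℝ} (hM : M.PosSemidef) :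
    1 ≤ (1 + M).det := by
  have hH : (1 + M).IsHermitian := isHermitian_one.add hM.isHermitian
  rw [hH.det_eq_prod_eigenvalues]
  refine Finset.one_le_prod fun i _ => ?_
  set v := hH.eigenvectorBasis i
  have hv : star (v : n → ℝ) ⬝ᵥ (v : n → ℝ) = 1 := by
    rw [dotProduct_comm, ← EuclideanSpace.inner_eq_star_dotProduct,
      real_inner_self_eq_norm_sq, hH.eigenvectorBasis.orthonormal.1 i, one_pow]
  rw [hH.eigenvalues_eq, add_mulVec, one_mulVec, dotProduct_add, hv]
  simpa using hM.dotProduct_mulVec_nonneg (v : n → ℝ)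

lemma PosDef.det_le_det_add {A B : Matrix n n ℝ} (hA : A.PosDef) (hB : B.PosSemidef) :
    A.det ≤ (A + B).det := by
  obtain ⟨C, rfl⟩ : ∃ C : Matrix n n ℝ, B = star C * C := by
    open scoped MatrixOrder in
    exact CStarAlgebra.nonneg_iff_eq_star_mul_self.mp hB.nonneg
  have hfactor : A + star C * C = A * (1 + A⁻¹ * star C * C) := by
    rw [mul_add, mul_one, ← mul_assoc, ← mul_assoc, mul_nonsing_inv _ hA.det_pos.ne'.isUnit,
      one_mul]
  -- Sylvester's determinant identity trades `A⁻¹ Cᴴ C` for the positive semidefinite `C A⁻¹ Cᴴ`.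
  have hsylvester : (1 + A⁻¹ * star C * C).det = (1 + C * A⁻¹ * star C).det := by
    rw [det_one_add_mul_comm, mul_assoc]
  have hpsd : (C * A⁻¹ * star C).PosSemidef := hA.inv.posSemidef.mul_mul_conjTranspose_same C
  rw [hfactor, det_mul, hsylvester]
  exact le_mul_of_one_le_right hA.det_pos.le hpsd.one_le_det_one_add

lemma det_mul_mul_transpose {R : Type*} [CommRing R] {P : Matrix n n R} (hP : P * Pᵀ = 1)
    (M : Matrix n n R) : (P * M * Pᵀ).det = M.det := by
  rw [det_mul, det_mul, mul_right_comm, ← det_mul, hP, det_one, one_mul]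

lemma smul_mul_diagonal_mul_transpose_add_smul_one {R : Type*} [CommRing R] {P : Matrix n n R}
    (hP : P * Pᵀ = 1) (s : n → R) (b c : R) :
    b • (P * diagonal s * Pᵀ) + c • 1 = P * diagonal (fun j => b * s j + c) * Pᵀ := by
  have hdiag : diagonal (fun j => b * s j + c) = b • diagonal s + c • 1 := by
    rw [smul_one_eq_diagonal, ← diagonal_smul, diagonal_add]; rfl
  rw [hdiag, Matrix.mul_add, Matrix.add_mul, Matrix.mul_smul, Matrix.smul_mul, Matrix.mul_smul,
    Matrix.smul_mul, Matrix.mul_one, hP]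

lemma det_smul_one_add_smul_inv {K : Type*} [Field K] {P S : Matrix n n K} {s : n → K}
    (hP : P * Pᵀ = 1) (hS : S = P * diagonal s * Pᵀ) (hs : ∀ j, s j ≠ 0) (b c : K) :
    (b • 1 + c • S⁻¹).det = ∏ j, (b * s j + c) / s j := by
  have hdetS : S.det = ∏ j, s j := by rw [hS, det_mul_mul_transpose hP, det_diagonal]
  have hunit : IsUnit S.det := by
    rw [hdetS]; exact (Finset.prod_ne_zero_iff.mpr fun j _ => hs j).isUnit
  have hfactor : b • 1 + c • S⁻¹ = S⁻¹ * (b • S + c • 1) := by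
    rw [Matrix.mul_add, Matrix.mul_smul, nonsing_inv_mul _ hunit, Matrix.mul_smul, Matrix.mul_one]
  rw [hfactor, det_mul, hS, smul_mul_diagonal_mul_transpose_add_smul_one hP, ← hS,
    det_mul_mul_transpose hP, det_diagonal, det_nonsing_inv, hdetS, Ring.inverse_eq_inv',
    Finset.prod_div_distrib, inv_mul_eq_div]

lemma pos_of_posDef_mul_diagonal_mul_transpose {P S : Matrix n n ℝ} {s : n → ℝ}
    (hP : P * Pᵀ = 1) (hS : S = P * diagonal s * Pᵀ) (hSpd : S.PosDef) (j : n) : 0 < s j := by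
  have hunit : IsUnit P := (isUnit_iff_isUnit_det P).mpr (isUnit_det_of_right_inverse hP)
  rw [hS, ← conjTranspose_eq_transpose_of_trivial, ← star_eq_conjTranspose,
    hunit.posDef_star_right_conjugate_iff] at hSpd
  exact posDef_diagonal_iff.mp hSpd j

end Matrix

lemma div_max_one_le_div {b c s : ℝ} (hb : 0 ≤ b) (hc : 0 ≤ c) (hs : 0 < s) :
    (b + c) / max s 1 ≤ (b * s + c) / s := by
  rw [div_le_div_iff₀ (lt_max_of_lt_right one_pos) hs]
  rcases le_total s 1 with h | h
  · rw [max_eq_right h]; nlinarith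
  · rw [max_eq_left h]; nlinarith [mul_nonneg (mul_nonneg hb hs.le) (sub_nonneg.mpr h)]

lemma pow_div_prod_max_one_le_prod_div {ι : Type*} [Fintype ι] {b c : ℝ} {s : ι → ℝ}
    (hb : 0 ≤ b) (hc : 0 ≤ c) (hs : ∀ j, 0 < s j) :
    (b + c) ^ Fintype.card ι / ∏ j, max (s j) 1 ≤ ∏ j, (b * s j + c) / s j := by
  rw [← Finset.card_univ, ← Finset.prod_const, ← Finset.prod_div_distrib]
  exact Finset.prod_le_prod (fun j _ => by positivity) fun j _ => div_max_one_le_div hb hc (hs j)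

lemma Real.pow_div_rpow_neg_half {x y : ℝ} (hx : 0 ≤ x) (hy : 0 ≤ y) (k : ℕ) :
    (x ^ k / y) ^ (-(1 : ℝ) / 2) = x ^ (-(k : ℝ) / 2) * y ^ ((1 : ℝ) / 2) := by
  rw [Real.div_rpow (by positivity) hy, ← Real.rpow_natCast, ← Real.rpow_mul hx, neg_div,
    Real.rpow_neg hy, div_inv_eq_mul]
  ring_nf

theorem det_lower_bound_and_inv_sqrt_upper_bound_general
    {J : ℕ} (dd : Fin J → ℝ) (b : ℝ) (hb : 0 < b)
    (hdd : ∀ j, b ≤ dd j)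
    (D : Matrix (Fin J) (Fin J) ℝ) (hD : D = Matrix.diagonal dd)
    (P : Matrix (Fin J) (Fin J) ℝ) (hP : P * Pᵀ = 1) (s : Fin J → ℝ)
    (S : Matrix (Fin J) (Fin J) ℝ) (hS : S = P * Matrix.diagonal s * Pᵀ)
    (hSpd : S.PosDef) (η : ℝ) (hη : 0 < η) :
    (∏ j, (b * s j + η) / s j ≤ (D + η • S⁻¹).det) ∧
      ((b + η) ^ J / ∏ j, max (s j) 1 ≤ ∏ j, (b * s j + η) / s j) ∧
      ((D + η • S⁻¹).det ^ (-(1 : ℝ) / 2)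
        ≤ (b + η) ^ (-(J : ℝ) / 2) * ∏ j, (max (s j) 1) ^ ((1 : ℝ) / 2)) := by
  have hs : ∀ j, 0 < s j := pos_of_posDef_mul_diagonal_mul_transpose hP hS hSpd
  have hsplit : D + η • S⁻¹ = b • 1 + η • S⁻¹ + diagonal (fun j => dd j - b) := by
    rw [hD, add_right_comm, smul_one_eq_diagonal, diagonal_add]
    simp only [add_sub_cancel]
  have hfirst : ∏ j, (b * s j + η) / s j ≤ (D + η • S⁻¹).det := by
    rw [← det_smul_one_add_smul_inv hP hS (fun j => (hs j).ne'), hsplit]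
    exact ((PosDef.one.smul hb).add (hSpd.inv.smul hη)).det_le_det_add
      (posSemidef_diagonal_iff.mpr fun j => sub_nonneg.mpr (hdd j))
  have hsecond : (b + η) ^ J / ∏ j, max (s j) 1 ≤ ∏ j, (b * s j + η) / s j := by
    simpa using pow_div_prod_max_one_le_prod_div hb.le hη.le hs
  refine ⟨hfirst, hsecond, ?_⟩
  have hmax : ∀ j, 0 ≤ max (s j) 1 := fun j => le_max_of_le_right zero_le_one
  calc (D + η • S⁻¹).det ^ (-(1 : ℝ) / 2)
      ≤ ((b + η) ^ J / ∏ j, max (s j) 1) ^ (-(1 : ℝ) / 2) :=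
        Real.rpow_le_rpow_of_nonpos (by positivity) (hsecond.trans hfirst) (by norm_num)
    _ = (b + η) ^ (-(J : ℝ) / 2) * ∏ j, (max (s j) 1) ^ ((1 : ℝ) / 2) := by
        rw [Real.pow_div_rpow_neg_half (by positivity) (Finset.prod_nonneg fun j _ => hmax j),
          Real.finsetProd_rpow _ _ fun j _ => hmax j]

/-- Let `D` be diagonal with all diagonal entries at least `b > 0`, and let
`S = P diag(s) Pᵀ` be symmetric positive definite with `P` orthogonal. For `η > 0`,
`det(D + ηS⁻¹) ≥ ∏ⱼ (b sⱼ + η)/sⱼ ≥ (b + η)^J / ∏ⱼ max{sⱼ, 1}`, and consequently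
`det(D + ηS⁻¹)^{-1/2} ≤ (b + η)^{-J/2} ∏ⱼ max{sⱼ, 1}^{1/2}`. -/
theorem det_lower_bound_and_inv_sqrt_upper_bound
    {J : ℕ} (hJ : 1 ≤ J) (dd : Fin J → ℝ) (b : ℝ) (hb : 0 < b)
    (hdd : ∀ j, b ≤ dd j)
    (D : Matrix (Fin J) (Fin J) ℝ) (hD : D = Matrix.diagonal dd)
    (P : Matrix (Fin J) (Fin J) ℝ) (hP : P * Pᵀ = 1) (s : Fin J → ℝ)
    (S : Matrix (Fin J) (Fin J) ℝ) (hS : S = P * Matrix.diagonal s * Pᵀ)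
    (hSpd : S.PosDef) (η : ℝ) (hη : 0 < η) :
    (∏ j, (b * s j + η) / s j ≤ (D + η • S⁻¹).det) ∧
      ((b + η) ^ J / ∏ j, max (s j) 1 ≤ ∏ j, (b * s j + η) / s j) ∧
      ((D + η • S⁻¹).det ^ (-(1 : ℝ) / 2)
        ≤ (b + η) ^ (-(J : ℝ) / 2) * ∏ j, (max (s j) 1) ^ ((1 : ℝ) / 2)) :=
  det_lower_bound_and_inv_sqrt_upper_bound_general dd b hb hdd D hD P hP s S hS hSpd η hη
end

section
/- For Lebesgue-almost every y ∈ ℝ^J, ∫_{1/ν₁}^{1/ν_J} ∫₀^∞ (1 + η)^{-2} · det(I + η(D*_w − ρW)^{-1})^{-1/2} · (y^T (I + η(D*_w − ρW)^{-1})^{-1} y)^{-J/2} dη dρ < ∞. That is, the joint marginal over (η, ρ) of the data density under the all-ones indicator configuration γ = 𝟙, after integrating out μ and σ², is finite almost everywhere in y. -/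
/-!
Put `A ρ = D* − ρW = D*^{1/2} (I − ρW*) D*^{1/2}`. On `[1/ν₁, 1/ν_J]` every eigenvalue of
`I − ρW*` is `1 − ρν ≥ 0`, with strict inequality inside, so `A ρ` is positive semidefinite on the
closed interval and positive definite on the open one. Since `W` has zero diagonal,
`tr (A ρ) = tr D* =: T`, which bounds every eigenvalue `λ` of `A ρ`. Diagonalising `A ρ` gives
`det (I + η A⁻¹) = ∏ (1 + η/λ) ≥ (1 + η/T)^J` and `(I + η A⁻¹)⁻¹ ≥ A / (T + η)` in the Loewner
order. The quadratic form `yᵀ (A ρ) y` is affine in `ρ`, so it is at least the smaller endpoint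
value `c`, and `c > 0` unless `y` lies in the kernel of one of the two (nonzero) endpoint
matrices, a null set. The `η`-dependence then cancels and the integrand is at most
`(1 + η)⁻² (T/c)^{J/2}`, which is integrable over `(1/ν₁, 1/ν_J) × (0, ∞)`.
-/

open Matrix MeasureTheory Set

theorem min_sub_mul_le_sub_mul {a b ρ u v : ℝ} (ha : a ≤ ρ) (hb : ρ ≤ b) :
    min (u - a * v) (u - b * v) ≤ u - ρ * v := by
  rcases le_total 0 v with hv | hv
  · exact (min_le_right _ _).trans (by nlinarith)
  · exact (min_le_left _ _).trans (by nlinarith)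

theorem mul_lt_one_of_mem_Ioo_inv {ν₁ ν₂ x ρ : ℝ} (h₁ : ν₁ < 0) (h₂ : 0 < ν₂)
    (hx : x ∈ Icc ν₁ ν₂) (hρ : ρ ∈ Ioo ν₁⁻¹ ν₂⁻¹) : ρ * x < 1 := by
  have e₁ : ν₁⁻¹ * ν₁ = 1 := inv_mul_cancel₀ h₁.ne
  have e₂ : ν₂⁻¹ * ν₂ = 1 := inv_mul_cancel₀ h₂.ne'
  rcases le_total 0 ρ with hρ0 | hρ0
  · nlinarith [hx.2, hρ.2]
  · nlinarith [hx.1, hρ.1]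

theorem mul_le_one_of_mem_Icc_inv {ν₁ ν₂ x ρ : ℝ} (h₁ : ν₁ < 0) (h₂ : 0 < ν₂)
    (hx : x ∈ Icc ν₁ ν₂) (hρ : ρ ∈ Icc ν₁⁻¹ ν₂⁻¹) : ρ * x ≤ 1 := by
  have e₁ : ν₁⁻¹ * ν₁ = 1 := inv_mul_cancel₀ h₁.ne
  have e₂ : ν₂⁻¹ * ν₂ = 1 := inv_mul_cancel₀ h₂.ne'
  rcases le_total 0 ρ with hρ0 | hρ0
  · nlinarith [hx.2, hρ.2]
  · nlinarith [hx.1, hρ.1]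

theorem integrableOn_Ioi_inv_sq_one_add :
    IntegrableOn (fun η : ℝ => ((1 + η) ^ 2)⁻¹) (Ioi 0) := by
  refine (integrableOn_add_rpow_Ioi_of_lt (a := -2) (m := 1) (by norm_num) (by norm_num)).congr_fun
    (fun η (hη : 0 < η) => ?_) measurableSet_Ioi
  show (η + 1) ^ (-2 : ℝ) = _
  rw [Real.rpow_neg (by positivity), add_comm, Real.rpow_two]

theorem lintegral_Ioo_lintegral_Ioi_lt_top {a b K : ℝ} {F : ℝ → ℝ → ℝ}
    (hF : ∀ ρ ∈ Ioo a b, ∀ η ∈ Ioi (0 : ℝ), F ρ η ≤ ((1 + η) ^ 2)⁻¹ * K) :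
    ∫⁻ ρ in Ioo a b, ∫⁻ η in Ioi (0 : ℝ), ENNReal.ofReal (F ρ η) < ⊤ := by
  have hint : IntegrableOn (fun η : ℝ => ((1 + η) ^ 2)⁻¹ * K) (Ioi 0) :=
    integrableOn_Ioi_inv_sq_one_add.mul_const K
  calc _ ≤ ∫⁻ _ in Ioo a b, ∫⁻ η in Ioi (0 : ℝ), ENNReal.ofReal (((1 + η) ^ 2)⁻¹ * K) :=
        setLIntegral_mono' measurableSet_Ioo fun ρ hρ =>
          setLIntegral_mono' measurableSet_Ioi fun η hη => ENNReal.ofReal_le_ofReal (hF ρ hρ η hη)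
    _ = (∫⁻ η in Ioi (0 : ℝ), ENNReal.ofReal (((1 + η) ^ 2)⁻¹ * K)) * volume (Ioo a b) :=
        setLIntegral_const _ _
    _ < ⊤ := ENNReal.mul_lt_top hint.setLIntegral_lt_top (by simp)

namespace Matrix

open scoped MatrixOrder

variable {n : Type*} [Fintype n] [DecidableEq n] {A M : Matrix n n ℝ}

theorem IsHermitian.det_cfc (hA : A.IsHermitian) (f : ℝ → ℝ) :
    (cfc f A).det = ∏ i, f (hA.eigenvalues i) := by
  rw [hA.cfc_eq, IsHermitian.cfc, Unitary.conjStarAlgAut_apply, det_mul_comm, ← mul_assoc,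
    Unitary.coe_star_mul_self, one_mul, det_diagonal]
  rfl

theorem PosDef.one_add_smul_inv_eq_cfc (hA : A.PosDef) (η : ℝ) :
    1 + η • A⁻¹ = cfc (fun x => 1 + η * x⁻¹) A := by
  have hc := fun f : ℝ → ℝ => (finite_spectrum A).continuousOn f
  rw [cfc_add (hf := hc _) (hg := hc _), cfc_const_one ℝ A, cfc_const_mul (hf := hc _),
    nonsing_inv_eq_ringInverse]
  exact congrArg _ (congrArg _ (cfc_ringInverse_id (R := ℝ) A hA.isUnit).symm)

theorem PosDef.inv_one_add_smul_inv_eq_cfc (hA : A.PosDef) {η : ℝ} (hη : 0 ≤ η) :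
    (1 + η • A⁻¹)⁻¹ = cfc (fun x => x / (x + η)) A := by
  have hc := fun f : ℝ → ℝ => (finite_spectrum A).continuousOn f
  rw [hA.one_add_smul_inv_eq_cfc, nonsing_inv_eq_ringInverse, ← cfc_inv (hf := hc _)]
  · refine cfc_congr fun x hx => ?_
    have := hA.isStrictlyPositive.spectrum_pos hx
    field_simp
  · intro x hx
    have := hA.isStrictlyPositive.spectrum_pos hx
    positivity

omit [DecidableEq n] in
theorem dotProduct_mulVec_mono {B C : Matrix n n ℝ} (h : B ≤ C) (y : n → ℝ) :
    y ⬝ᵥ B *ᵥ y ≤ y ⬝ᵥ C *ᵥ y := by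
  have := (le_iff.mp h).dotProduct_mulVec_nonneg y
  rw [star_trivial, sub_mulVec, dotProduct_sub] at this
  linarith

theorem PosDef.pow_card_le_det_one_add_smul_inv (hA : A.PosDef) {T η : ℝ} (hT0 : 0 < T)
    (hT : ∀ i, hA.1.eigenvalues i ≤ T) (hη : 0 ≤ η) :
    (1 + η / T) ^ Fintype.card n ≤ (1 + η • A⁻¹).det := by
  rw [hA.one_add_smul_inv_eq_cfc, hA.1.det_cfc, ← Finset.card_univ, ← Finset.prod_const]
  refine Finset.prod_le_prod (fun _ _ => by positivity) fun i _ => ?_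
  have := hA.eigenvalues_pos i
  rw [← div_eq_mul_inv]
  gcongr
  exact hT i

theorem PosDef.smul_le_inv_one_add_smul_inv (hA : A.PosDef) {T η : ℝ}
    (hT : ∀ i, hA.1.eigenvalues i ≤ T) (hη : 0 ≤ η) :
    (T + η)⁻¹ • A ≤ (1 + η • A⁻¹)⁻¹ := by
  have hc := fun f : ℝ → ℝ => (finite_spectrum A).continuousOn f
  have hsmul : (T + η)⁻¹ • A = cfc (fun x => (T + η)⁻¹ * x) A := by
    rw [cfc_const_mul _ (fun x => x) A (hc _), cfc_id' ℝ A]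
  rw [hA.inv_one_add_smul_inv_eq_cfc hη, hsmul]
  refine cfc_mono (hf := hc _) (hg := hc _) fun x hx => ?_
  obtain ⟨i, rfl⟩ := hA.1.spectrum_real_eq_range_eigenvalues ▸ hx
  have := hA.eigenvalues_pos i
  rw [inv_mul_eq_div]
  gcongr
  exact hT i

theorem PosDef.det_rpow_mul_dotProduct_rpow_le (hA : A.PosDef) {T c η : ℝ} (hT0 : 0 < T)
    (hT : ∀ i, hA.1.eigenvalues i ≤ T) (hc : 0 < c) (hη : 0 ≤ η) {y : n → ℝ}
    (hcy : c ≤ y ⬝ᵥ A *ᵥ y) :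
    (1 + η • A⁻¹).det ^ (-(1 : ℝ) / 2) * (y ⬝ᵥ (1 + η • A⁻¹)⁻¹ *ᵥ y) ^ (-(Fintype.card n : ℝ) / 2)
      ≤ (T / c) ^ ((Fintype.card n : ℝ) / 2) := by
  set m := Fintype.card n
  have hdet := hA.pow_card_le_det_one_add_smul_inv hT0 hT hη
  have hquad : c / (T + η) ≤ y ⬝ᵥ (1 + η • A⁻¹)⁻¹ *ᵥ y := by
    have := dotProduct_mulVec_mono (hA.smul_le_inv_one_add_smul_inv hT hη) y
    rw [smul_mulVec, dotProduct_smul, smul_eq_mul, ← div_eq_inv_mul] at this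
    exact (div_le_div_of_nonneg_right hcy (by positivity)).trans this
  have hsplit : ((1 + η / T) ^ m) ^ (-(1 : ℝ) / 2) * (c / (T + η)) ^ (-(m : ℝ) / 2)
      = (T / c) ^ ((m : ℝ) / 2) := by
    rw [← Real.rpow_natCast, ← Real.rpow_mul (by positivity),
      show (m : ℝ) * (-1 / 2) = -m / 2 by ring, ← Real.mul_rpow (by positivity) (by positivity),
      neg_div, Real.rpow_neg (by positivity), ← Real.inv_rpow (by positivity)]
    congr 1
    field_simp
  calc _ ≤ ((1 + η / T) ^ m) ^ (-(1 : ℝ) / 2) * (c / (T + η)) ^ (-(m : ℝ) / 2) := by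
        gcongr ?_ * ?_
        · exact Real.rpow_nonneg ((by positivity : (0:ℝ) ≤ c / (T + η)).trans hquad) _
        · exact Real.rpow_le_rpow_of_nonpos (by positivity) hdet (by norm_num)
        · exact Real.rpow_le_rpow_of_nonpos (by positivity) hquad
            (div_nonpos_of_nonpos_of_nonneg (neg_nonpos.mpr m.cast_nonneg) zero_le_two)
    _ = (T / c) ^ ((m : ℝ) / 2) := hsplit

theorem PosSemidef.eigenvalues_le_trace (hA : A.PosSemidef) (i : n) :
    hA.1.eigenvalues i ≤ A.trace := by
  rw [hA.1.trace_eq_sum_eigenvalues]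
  exact Finset.single_le_sum (fun j _ => hA.eigenvalues_nonneg j) (Finset.mem_univ i)

theorem IsHermitian.one_sub_smul_eq_cfc (hM : M.IsHermitian) (ρ : ℝ) :
    1 - ρ • M = cfc (fun x => 1 - ρ * x) M := by
  have hc := fun f : ℝ → ℝ => (finite_spectrum M).continuousOn f
  rw [cfc_sub (hf := hc _) (hg := hc _), cfc_const_one ℝ M, cfc_const_mul _ (fun x => x) M (hc _),
    cfc_id' ℝ M]

theorem IsHermitian.posDef_one_sub_smul (hM : M.IsHermitian) {ρ : ℝ}
    (h : ∀ i, ρ * hM.eigenvalues i < 1) : (1 - ρ • M).PosDef := by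
  rw [hM.one_sub_smul_eq_cfc, ← isStrictlyPositive_iff_posDef,
    cfc_isStrictlyPositive_iff _ _ ((finite_spectrum M).continuousOn _),
    hM.spectrum_real_eq_range_eigenvalues]
  rintro - ⟨i, rfl⟩
  linarith [h i]

theorem IsHermitian.posSemidef_one_sub_smul (hM : M.IsHermitian) {ρ : ℝ}
    (h : ∀ i, ρ * hM.eigenvalues i ≤ 1) : (1 - ρ • M).PosSemidef := by
  rw [hM.one_sub_smul_eq_cfc, ← nonneg_iff_posSemidef,
    cfc_nonneg_iff _ _ ((finite_spectrum M).continuousOn _),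
    hM.spectrum_real_eq_range_eigenvalues]
  rintro - ⟨i, rfl⟩
  linarith [h i]

omit [DecidableEq n] in
theorem PosSemidef.ae_pos_dotProduct_mulVec (hA : A.PosSemidef) (h0 : A ≠ 0) :
    ∀ᵐ y : n → ℝ, 0 < y ⬝ᵥ A *ᵥ y := by
  have hker : volume (LinearMap.ker A.mulVecLin : Set (n → ℝ)) = 0 :=
    Measure.addHaar_submodule _ _ fun htop => h0 <| by
      classical
      rwa [LinearMap.ker_eq_top, ← toLin'_apply', map_eq_zero_iff _ toLin'.injective] at htop
  filter_upwards [measure_eq_zero_iff_ae_notMem.mp hker] with y hy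
  have hnonneg := hA.dotProduct_mulVec_nonneg y
  rw [star_trivial] at hnonneg
  exact hnonneg.lt_of_ne fun h =>
    hy <| (hA.dotProduct_mulVec_zero_iff y).mp <| by rw [star_trivial, h]

theorem diagonal_sub_smul_eq_conjTranspose_mul_mul {δ : n → ℝ} (hδ : ∀ j, 0 < δ j)
    (W : Matrix n n ℝ) (ρ : ℝ) :
    diagonal δ - ρ • W = (diagonal fun j => √(δ j))ᴴ *
      (1 - ρ • (diagonal (fun j => (√(δ j))⁻¹) * W * diagonal fun j => (√(δ j))⁻¹)) *
        diagonal fun j => √(δ j) := by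
  have hinv : (diagonal fun j => √(δ j)) * (diagonal fun j => (√(δ j))⁻¹) = 1 := by
    rw [diagonal_mul_diagonal, ← diagonal_one]
    exact congrArg diagonal (funext fun j => mul_inv_cancel₀ (Real.sqrt_pos.mpr (hδ j)).ne')
  have hinv' : (diagonal fun j => (√(δ j))⁻¹) * (diagonal fun j => √(δ j)) = 1 := by
    rw [diagonal_mul_diagonal, ← diagonal_one]
    exact congrArg diagonal (funext fun j => inv_mul_cancel₀ (Real.sqrt_pos.mpr (hδ j)).ne')
  have hsq : (diagonal fun j => √(δ j)) * (diagonal fun j => √(δ j)) = diagonal δ := by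
    rw [diagonal_mul_diagonal]
    exact congrArg diagonal (funext fun j => Real.mul_self_sqrt (hδ j).le)
  rw [diagonal_conjTranspose, star_trivial, mul_sub, sub_mul, mul_one, hsq, mul_smul_comm,
    smul_mul_assoc]
  congr 2
  simp only [← mul_assoc, hinv, one_mul]
  rw [mul_assoc, hinv', mul_one]

theorem ae_marginal_lintegral_lt_top {D W : Matrix n n ℝ} {a b : ℝ}
    (hPD : ∀ ρ ∈ Ioo a b, (D - ρ • W).PosDef) (ha : (D - a • W).PosSemidef)
    (hb : (D - b • W).PosSemidef) (hW : W.trace = 0) (hD : 0 < D.trace) :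
    ∀ᵐ y : n → ℝ, ∫⁻ ρ in Ioo a b, ∫⁻ η in Ioi (0 : ℝ),
      ENNReal.ofReal (((1 + η) ^ 2)⁻¹ * (1 + η • (D - ρ • W)⁻¹).det ^ (-(1 : ℝ) / 2) *
        (y ⬝ᵥ ((1 + η • (D - ρ • W)⁻¹)⁻¹ *ᵥ y)) ^ (-(Fintype.card n : ℝ) / 2)) < ⊤ := by
  have htrace (ρ : ℝ) : (D - ρ • W).trace = D.trace := by
    rw [trace_sub, trace_smul, hW, smul_zero, sub_zero]
  have hne (ρ : ℝ) : D - ρ • W ≠ 0 := fun h => hD.ne' (by rw [← htrace ρ, h, trace_zero])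
  have hquad (y : n → ℝ) (ρ : ℝ) :
      y ⬝ᵥ (D - ρ • W) *ᵥ y = y ⬝ᵥ D *ᵥ y - ρ * (y ⬝ᵥ W *ᵥ y) := by
    rw [sub_mulVec, smul_mulVec, dotProduct_sub, dotProduct_smul, smul_eq_mul]
  filter_upwards [ha.ae_pos_dotProduct_mulVec (hne a), hb.ae_pos_dotProduct_mulVec (hne b)]
    with y hya hyb
  set c := min (y ⬝ᵥ (D - a • W) *ᵥ y) (y ⬝ᵥ (D - b • W) *ᵥ y)
  refine lintegral_Ioo_lintegral_Ioi_lt_top (K := (D.trace / c) ^ ((Fintype.card n : ℝ) / 2))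
    fun ρ hρ η hη => ?_
  have hc : c ≤ y ⬝ᵥ (D - ρ • W) *ᵥ y := by
    simp only [c, hquad]
    exact min_sub_mul_le_sub_mul hρ.1.le hρ.2.le
  rw [mul_assoc]
  refine mul_le_mul_of_nonneg_left ((hPD ρ hρ).det_rpow_mul_dotProduct_rpow_le hD
    (fun i => htrace ρ ▸ (hPD ρ hρ).posSemidef.eigenvalues_le_trace i) (lt_min hya hyb)
    (le_of_lt hη) hc) (by positivity)

end Matrix

theorem marginal_allones_integral_finite_general
    {J : ℕ} (hJ : 1 ≤ J) (W : Matrix (Fin J) (Fin J) ℝ)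
    (hWdiag : ∀ i, W i i = 0) (d : ℝ)
    (Dstar : Matrix (Fin J) (Fin J) ℝ)
    (hDstar : Dstar = Matrix.diagonal (fun j => (∑ i, W j i) + d))
    (hDpd : Dstar.PosDef)
    (Wstar : Matrix (Fin J) (Fin J) ℝ)
    (hWstar : Wstar = Matrix.diagonal (fun j => (Real.sqrt ((∑ i, W j i) + d))⁻¹) * W *
        Matrix.diagonal (fun j => (Real.sqrt ((∑ i, W j i) + d))⁻¹))
    (hH : Wstar.IsHermitian)
    (hν1 : (⨅ j, hH.eigenvalues j) < 0) (hνJ : 0 < (⨆ j, hH.eigenvalues j)) :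
    ∀ᵐ y : Fin J → ℝ,
      (∫⁻ ρ in Set.Ioo (⨅ j, hH.eigenvalues j)⁻¹ (⨆ j, hH.eigenvalues j)⁻¹,
        ∫⁻ η in Set.Ioi (0 : ℝ),
          ENNReal.ofReal (((1 + η) ^ 2)⁻¹ *
            ((1 : Matrix (Fin J) (Fin J) ℝ) + η • (Dstar - ρ • W)⁻¹).det ^ (-(1 : ℝ) / 2) *
            (y ⬝ᵥ (((1 : Matrix (Fin J) (Fin J) ℝ) + η • (Dstar - ρ • W)⁻¹)⁻¹ *ᵥ y))
              ^ (-(J : ℝ) / 2))) < ⊤ := by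
  have : Nonempty (Fin J) := ⟨⟨0, hJ⟩⟩
  set ν₁ := ⨅ j, hH.eigenvalues j
  set ν₂ := ⨆ j, hH.eigenvalues j
  have hν (j : Fin J) : hH.eigenvalues j ∈ Icc ν₁ ν₂ :=
    ⟨ciInf_le (Finite.bddBelow_range _) j, le_ciSup (Finite.bddAbove_range _) j⟩
  have hle : ν₁⁻¹ ≤ ν₂⁻¹ := (inv_lt_zero.mpr hν1).le.trans (inv_pos.mpr hνJ).le
  have hδ : ∀ j, 0 < (∑ i, W j i) + d := posDef_diagonal_iff.mp (hDstar ▸ hDpd)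
  have hS : Function.Injective (diagonal fun j => √((∑ i, W j i) + d)).mulVec :=
    mulVec_injective_iff_isUnit.mpr <| isUnit_diagonal.mpr <|
      Pi.isUnit_iff.mpr fun j => (Real.sqrt_pos.mpr (hδ j)).ne'.isUnit
  have hfactor := diagonal_sub_smul_eq_conjTranspose_mul_mul hδ W
  rw [← hDstar, ← hWstar] at hfactor
  have hPSD (ρ : ℝ) (hρ : ρ ∈ Icc ν₁⁻¹ ν₂⁻¹) : (Dstar - ρ • W).PosSemidef :=
    hfactor ρ ▸ (hH.posSemidef_one_sub_smul fun i =>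
      mul_le_one_of_mem_Icc_inv hν1 hνJ (hν i) hρ).conjTranspose_mul_mul_same _
  have hPD (ρ : ℝ) (hρ : ρ ∈ Ioo ν₁⁻¹ ν₂⁻¹) : (Dstar - ρ • W).PosDef :=
    hfactor ρ ▸ (hH.posDef_one_sub_smul fun i =>
      mul_lt_one_of_mem_Ioo_inv hν1 hνJ (hν i) hρ).conjTranspose_mul_mul_same hS
  have := ae_marginal_lintegral_lt_top hPD (hPSD _ (left_mem_Icc.mpr hle))
    (hPSD _ (right_mem_Icc.mpr hle)) (by simp [trace, hWdiag]) hDpd.trace_pos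
  rwa [Fintype.card_fin] at this

/-- Finiteness (for almost every `y`) of the joint marginal over `(η, ρ)` of the data
density under the all-ones indicator configuration `γ = 𝟙`, after integrating out `μ`
and `σ²`:
`∫_{1/ν₁}^{1/ν_J} ∫₀^∞ (1+η)^{-2} det(I + η(D*_w − ρW)⁻¹)^{-1/2}
  (yᵀ(I + η(D*_w − ρW)⁻¹)⁻¹y)^{-J/2} dη dρ < ∞`. -/
theorem marginal_allones_integral_finite
    {J : ℕ} (hJ : 1 ≤ J) (W : Matrix (Fin J) (Fin J) ℝ)
    (hWsym : W.IsSymm) (hWnonneg : ∀ i j, 0 ≤ W i j) (hWdiag : ∀ i, W i i = 0)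
    (hWne : W ≠ 0) (d : ℝ) (hd : 0 ≤ d)
    (Dstar : Matrix (Fin J) (Fin J) ℝ)
    (hDstar : Dstar = Matrix.diagonal (fun j => (∑ i, W j i) + d))
    (hDpd : Dstar.PosDef)
    (Wstar : Matrix (Fin J) (Fin J) ℝ)
    (hWstar : Wstar = Matrix.diagonal (fun j => (Real.sqrt ((∑ i, W j i) + d))⁻¹) * W *
        Matrix.diagonal (fun j => (Real.sqrt ((∑ i, W j i) + d))⁻¹))
    (hH : Wstar.IsHermitian)
    (hν1 : (⨅ j, hH.eigenvalues j) < 0) (hνJ : 0 < (⨆ j, hH.eigenvalues j)) :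
    ∀ᵐ y : Fin J → ℝ,
      (∫⁻ ρ in Set.Ioo (⨅ j, hH.eigenvalues j)⁻¹ (⨆ j, hH.eigenvalues j)⁻¹,
        ∫⁻ η in Set.Ioi (0 : ℝ),
          ENNReal.ofReal (((1 + η) ^ 2)⁻¹ *
            ((1 : Matrix (Fin J) (Fin J) ℝ) + η • (Dstar - ρ • W)⁻¹).det ^ (-(1 : ℝ) / 2) *
            (y ⬝ᵥ (((1 : Matrix (Fin J) (Fin J) ℝ) + η • (Dstar - ρ • W)⁻¹)⁻¹ *ᵥ y))
              ^ (-(J : ℝ) / 2))) < ⊤ :=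
  marginal_allones_integral_finite_general hJ W hWdiag d Dstar hDstar hDpd Wstar hWstar hH hν1 hνJ
end
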